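/- Define q(m) to be the least prime coprime to m. For every real ε with 0 < ε < 1/2, there exists a positive integer C such that for every integer n ≥ C and every positive integer m < n^{2-ε}, we have 2^{1/ε} · q(m)^{(2-ε)/ε} < n. -/

import Mathlib

/-- The least prime not dividing `m`. -/
noncomputable def leastPrimeCoprime (m : ℕ) : ℕ := sInf {p : ℕ | p.Prime ∧ ¬ p ∣ m}

/-!
All primes below `q = q(m)` divide `m`. If there are `k` of them, their product is at least
`(k + 1)!`, while Bertrand's postulate gives `q ≤ 2 ^ (k + 1)`. Since `a ^ j ≤ exp a * j !`, this
yields `q(m) ^ t ≤ exp (2 ^ t) * m` for every `t`, hence `q(m) ≤ D_δ m ^ δ` for every `δ > 0`.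
With `δ` chosen so that `m < n ^ (2 - ε)` turns `m ^ (δ (2 - ε) / ε)` into at most `√n`, the
claimed bound holds as soon as `√n` exceeds the constant `2 ^ (1/ε) D_δ ^ ((2 - ε)/ε)`.
-/

open Nat Finset Real

lemma nth_prime_succ_le_two_mul (i : ℕ) : nth Nat.Prime (i + 1) ≤ 2 * nth Nat.Prime i := by
  obtain ⟨r, hr, hlt, hle⟩ := exists_prime_lt_and_le_two_mul _ (prime_nth_prime i).ne_zero
  exact (le_of_not_gt fun h => (le_nth_of_lt_nth_succ h hr).not_gt hlt).trans hle

lemma nth_prime_le_two_pow (i : ℕ) : nth Nat.Prime i ≤ 2 ^ (i + 1) := by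
  induction i with
  | zero => simp [nth_prime_zero_eq_two]
  | succ i ih =>
    calc nth Nat.Prime (i + 1) ≤ 2 * nth Nat.Prime i := nth_prime_succ_le_two_mul i
      _ ≤ 2 * 2 ^ (i + 1) := Nat.mul_le_mul_left 2 ih
      _ = 2 ^ (i + 1 + 1) := (Nat.pow_succ' ..).symm

lemma factorial_card_add_one_le_prod (s : Finset ℕ) (hs : ∀ x ∈ s, 2 ≤ x) :
    (#s + 1)! ≤ ∏ x ∈ s, x := by
  induction s using Finset.induction_on_max with
  | empty => simp
  | insert a s hlt ih =>
    have ha : a ∉ s := fun h => (hlt a h).false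
    have hsub : s ⊆ Ico 2 a := fun x hx => mem_Ico.2 ⟨hs x (mem_insert_of_mem hx), hlt x hx⟩
    have hcard : #s + 2 ≤ a := by
      have h2a := hs a (mem_insert_self a s)
      have := card_le_card hsub
      simp only [Nat.card_Ico] at this
      omega
    rw [card_insert_of_notMem ha, prod_insert ha, factorial_succ]
    exact Nat.mul_le_mul (by omega) (ih fun x hx => hs x (mem_insert_of_mem hx))

section LeastPrimeCoprime

variable {m : ℕ}

lemma leastPrimeCoprime_spec (hm : m ≠ 0) :
    (leastPrimeCoprime m).Prime ∧ ¬ leastPrimeCoprime m ∣ m := by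
  refine Nat.sInf_mem (s := {p | p.Prime ∧ ¬ p ∣ m}) ?_
  obtain ⟨p, hmp, hp⟩ := exists_infinite_primes (m + 1)
  exact ⟨p, hp, fun h => by have := Nat.le_of_dvd (pos_of_ne_zero hm) h; omega⟩

lemma Nat.Prime.dvd_of_lt_leastPrimeCoprime {p : ℕ} (hp : p.Prime) (h : p < leastPrimeCoprime m) :
    p ∣ m := by
  by_contra hpm
  exact notMem_of_lt_sInf h ⟨hp, hpm⟩

lemma prod_primes_lt_leastPrimeCoprime_dvd (m : ℕ) :
    ∏ p ∈ range (leastPrimeCoprime m) with p.Prime, p ∣ m :=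
  prod_primes_dvd m (fun p hp => (mem_filter.1 hp).2.prime) fun p hp => by
    obtain ⟨hpq, hp⟩ := mem_filter.1 hp
    exact hp.dvd_of_lt_leastPrimeCoprime (mem_range.1 hpq)

lemma exists_factorial_le_and_leastPrimeCoprime_le_two_pow (hm : m ≠ 0) :
    ∃ k, (k + 1)! ≤ m ∧ leastPrimeCoprime m ≤ 2 ^ (k + 1) := by
  refine ⟨count Nat.Prime (leastPrimeCoprime m), ?_, ?_⟩
  · rw [count_eq_card_filter_range]
    exact (factorial_card_add_one_le_prod _ fun p hp => (mem_filter.1 hp).2.two_le).trans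
      (Nat.le_of_dvd (pos_of_ne_zero hm) (prod_primes_lt_leastPrimeCoprime_dvd m))
  · calc leastPrimeCoprime m = nth Nat.Prime (count Nat.Prime (leastPrimeCoprime m)) :=
          (nth_count (leastPrimeCoprime_spec hm).1).symm
      _ ≤ _ := nth_prime_le_two_pow _

lemma leastPrimeCoprime_pow_le (t : ℕ) (hm : m ≠ 0) :
    (leastPrimeCoprime m : ℝ) ^ t ≤ exp (2 ^ t) * m := by
  obtain ⟨k, hkm, hqk⟩ := exists_factorial_le_and_leastPrimeCoprime_le_two_pow hm
  calc (leastPrimeCoprime m : ℝ) ^ t ≤ ((2 : ℝ) ^ (k + 1)) ^ t := by gcongr; exact_mod_cast hqk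
    _ = ((2 : ℝ) ^ t) ^ (k + 1) := by rw [← pow_mul, ← pow_mul, Nat.mul_comm]
    _ ≤ exp (2 ^ t) * (k + 1)! :=
      (div_le_iff₀ (by positivity)).1 (pow_div_factorial_le_exp _ (by positivity) _)
    _ ≤ exp (2 ^ t) * m := by gcongr

end LeastPrimeCoprime

lemma exists_leastPrimeCoprime_le_mul_rpow {δ : ℝ} (hδ : 0 < δ) :
    ∃ D > 0, ∀ m : ℕ, m ≠ 0 → (leastPrimeCoprime m : ℝ) ≤ D * (m : ℝ) ^ δ := by
  set t := ⌈δ⁻¹⌉₊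
  have ht : t ≠ 0 := (Nat.ceil_pos.2 (inv_pos.2 hδ)).ne'
  have htδ : (t : ℝ)⁻¹ ≤ δ := inv_le_of_inv_le₀ hδ (Nat.le_ceil _)
  refine ⟨exp (2 ^ t) ^ (t : ℝ)⁻¹, by positivity, fun m hm => ?_⟩
  calc (leastPrimeCoprime m : ℝ) = ((leastPrimeCoprime m : ℝ) ^ t) ^ (t : ℝ)⁻¹ :=
        (pow_rpow_inv_natCast (Nat.cast_nonneg _) ht).symm
    _ ≤ (exp (2 ^ t) * m) ^ (t : ℝ)⁻¹ := by gcongr; exact leastPrimeCoprime_pow_le t hm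
    _ = exp (2 ^ t) ^ (t : ℝ)⁻¹ * (m : ℝ) ^ (t : ℝ)⁻¹ := mul_rpow (by positivity) (by positivity)
    _ ≤ exp (2 ^ t) ^ (t : ℝ)⁻¹ * (m : ℝ) ^ δ := by
      gcongr; exact_mod_cast Nat.one_le_iff_ne_zero.2 hm

theorem stmt_6 (ε : ℝ) (hε0 : 0 < ε) (hε : ε < 1 / 2) :
    ∃ C : ℕ, 0 < C ∧ ∀ n : ℕ, C ≤ n → ∀ m : ℕ, 0 < m →
      (m : ℝ) < (n : ℝ) ^ (2 - ε) →
      (2 : ℝ) ^ (1 / ε) * (leastPrimeCoprime m : ℝ) ^ ((2 - ε) / ε) < n := by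
  have h2ε : 0 < 2 - ε := by linarith
  set β := (2 - ε) / ε
  set δ := ε / (2 * (2 - ε) ^ 2)
  have hδβ : (2 - ε) * (δ * β) = 1 / 2 := by simp only [β, δ]; field_simp
  obtain ⟨D, hD, hqD⟩ := exists_leastPrimeCoprime_le_mul_rpow (δ := δ) (by positivity)
  set E := (2 : ℝ) ^ (1 / ε) * D ^ β
  refine ⟨⌈E ^ 2⌉₊ + 1, Nat.succ_pos _, fun n hn m hm hmn => ?_⟩
  have hEn : E < √n := (lt_sqrt (by positivity)).2 <|
    (Nat.le_ceil _).trans_lt (by exact_mod_cast Nat.lt_of_succ_le hn)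
  have hm_lt_sqrt : (m : ℝ) ^ (δ * β) < √n := by
    rw [sqrt_eq_rpow, ← hδβ, rpow_mul (Nat.cast_nonneg n)]
    exact rpow_lt_rpow (Nat.cast_nonneg _) hmn (mul_pos (by positivity) (by positivity))
  calc (2 : ℝ) ^ (1 / ε) * (leastPrimeCoprime m : ℝ) ^ β
      ≤ 2 ^ (1 / ε) * (D * (m : ℝ) ^ δ) ^ β := by gcongr; exact hqD m hm.ne'
    _ = E * (m : ℝ) ^ (δ * β) := by
      rw [mul_rpow hD.le (by positivity), ← rpow_mul (Nat.cast_nonneg _)]; ring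
    _ < E * √n := by gcongr
    _ ≤ √n * √n := by gcongr
    _ = n := mul_self_sqrt (Nat.cast_nonneg _)
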